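/- arXiv:1804.11094 — 2 statements merged into one kernel-verified Lean document; each statement's English description precedes it below -/
import Mathlib

section
/- Any two edges of the n-dimensional hypercube Q_n (n ≥ 2) are contained in a common Hamiltonian cycle. -/
def Q (n : ℕ) : SimpleGraph (Fin n → ZMod 2) where
  Adj x y := hammingDist x y = 1
  symm := ⟨fun x y h => by rw [hammingDist_comm]; exact h⟩
  loopless := ⟨fun x h => by simp [hammingDist_self] at h⟩

/-!
Induction on `n`, starting from the square `Q 2`. Two edges of `Q (n + 1)` with `n ≥ 2` change
at most two of the `n + 1` coordinates, so some coordinate `k` is constant on both. Splitting off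
`k` identifies `Q (n + 1)` with the prism `Q n □ K₂`, in which both edges are horizontal, lying
over edges `e'`, `f'` of `Q n`. By induction `e'` and `f'` lie on a Hamiltonian cycle `C` of `Q n`;
deleting a third edge `uw` of `C` leaves a Hamiltonian path `P` from `u` to `w` through `e'` and
`f'`. Going along `P` on level `0`, up the rung at `w`, back along `P` on level `1` and down the
rung at `u` is a Hamiltonian cycle of the prism that contains both copies of every edge of `P`.
-/

open SimpleGraph

namespace SimpleGraph.Walk

section BoxProd

variable {α β : Type*} {G : SimpleGraph α} (H : SimpleGraph β) {u v : α}

@[simp]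
lemma support_boxProdLeft (b : β) (p : G.Walk u v) :
    (p.boxProdLeft H b).support = p.support.map (·, b) :=
  support_map _ _

@[simp]
lemma edges_boxProdLeft (b : β) (p : G.Walk u v) :
    (p.boxProdLeft H b).edges = p.edges.map (Sym2.map (·, b)) :=
  edges_map _ _

@[simp]
lemma length_boxProdLeft (b : β) (p : G.Walk u v) : (p.boxProdLeft H b).length = p.length :=
  length_map _ _

end BoxProd

variable {V : Type*} {G : SimpleGraph V}

lemma IsCycle.snd_or_penultimate_of_mem_edges {u v : V} {c : G.Walk u u} (hc : c.IsCycle)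
    (huv : s(u, v) ∈ c.edges) : v = c.snd ∨ v = c.penultimate := by
  cases c with
  | nil => simp at huv
  | cons h q =>
    have hq := ((cons_isCycle_iff q h).1 hc).1
    rw [edges_cons, List.mem_cons, Sym2.congr_right] at huv
    rcases huv with rfl | huv
    · exact Or.inl (by simp)
    · have hnil : ¬q.Nil := fun hn => h.ne hn.eq.symm
      rw [penultimate_cons_of_not_nil _ _ hnil]
      exact Or.inr (hq.eq_penultimate_of_mem_edges huv)

variable [DecidableEq V]

lemma IsCycle.exists_mem_edges_ne_ne {u : V} {c : G.Walk u u} (hc : c.IsCycle) (e f : Sym2 V) :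
    ∃ g ∈ c.edges, g ≠ e ∧ g ≠ f := by
  have hcard : ({e, f} : Finset (Sym2 V)).card < c.edges.toFinset.card := by
    rw [List.toFinset_card_of_nodup hc.edges_nodup, length_edges]
    exact Finset.card_le_two.trans_lt hc.three_le_length
  obtain ⟨g, hg, hgef⟩ := Finset.exists_mem_notMem_of_card_lt_card hcard
  simp only [Finset.mem_insert, Finset.mem_singleton, not_or] at hgef
  exact ⟨g, List.mem_toFinset.1 hg, hgef⟩

lemma IsHamiltonian.reverse {u v : V} {p : G.Walk u v} (hp : p.IsHamiltonian) :
    p.reverse.IsHamiltonian := fun a => by rw [support_reverse, List.count_reverse, hp a]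

lemma IsHamiltonianCycle.reverse {u : V} {c : G.Walk u u} (hc : c.IsHamiltonianCycle) :
    c.reverse.IsHamiltonianCycle := by
  have := hc.finite
  have := Fintype.ofFinite V
  rw [isHamiltonianCycle_iff_isCycle_and_length_eq] at hc ⊢
  exact ⟨hc.1.reverse, by rw [length_reverse, hc.2]⟩

lemma IsHamiltonianCycle.exists_isHamiltonian_of_snd_eq {u v : V} {c : G.Walk u u}
    (hc : c.IsHamiltonianCycle) (hv : c.snd = v) :
    ∃ p : G.Walk u v, p.IsHamiltonian ∧ ∀ g ∈ c.edges, g ≠ s(u, v) → g ∈ p.edges := by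
  subst hv
  refine ⟨c.tail.reverse, hc.isHamiltonian_tail.reverse, fun g hg hne => ?_⟩
  rw [← cons_tail_eq c hc.not_nil, edges_cons, List.mem_cons] at hg
  simpa [hne] using hg

theorem IsHamiltonianCycle.exists_isHamiltonian_of_mem_edges {a u v : V} {c : G.Walk a a}
    (hc : c.IsHamiltonianCycle) (huv : s(u, v) ∈ c.edges) :
    ∃ p : G.Walk u v, p.IsHamiltonian ∧ ∀ g ∈ c.edges, g ≠ s(u, v) → g ∈ p.edges := by
  have hu : u ∈ c.support := c.fst_mem_support_of_mem_edges huv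
  have hrot : ∀ g, g ∈ (c.rotate u hu).edges ↔ g ∈ c.edges :=
    fun g => (c.rotate_edges u hu).mem_iff
  suffices ∀ c' : G.Walk u u, c'.IsHamiltonianCycle → s(u, v) ∈ c'.edges →
      ∃ p : G.Walk u v, p.IsHamiltonian ∧ ∀ g ∈ c'.edges, g ≠ s(u, v) → g ∈ p.edges by
    simpa only [hrot] using this _ (hc.rotate hu) ((hrot _).2 huv)
  intro c hc huv
  rcases hc.isCycle.snd_or_penultimate_of_mem_edges huv with hv | hv
  · exact hc.exists_isHamiltonian_of_snd_eq hv.symm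
  · simpa only [edges_reverse, List.mem_reverse] using
      hc.reverse.exists_isHamiltonian_of_snd_eq (by rw [snd_reverse, hv])

theorem IsHamiltonian.exists_isHamiltonianCycle_boxProd {u v : V} {p : G.Walk u v}
    (hp : p.IsHamiltonian) (huv : u ≠ v) :
    ∃ c : (G □ (⊤ : SimpleGraph (ZMod 2))).Walk (u, 1) (u, 1),
      c.IsHamiltonianCycle ∧ ∀ g ∈ p.edges, ∀ b, g.map (·, b) ∈ c.edges := by
  have rung : ∀ x a b, a ≠ b → (G □ (⊤ : SimpleGraph (ZMod 2))).Adj (x, a) (x, b) :=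
    fun x a b hab => boxProd_adj_right.2 hab
  let W := (p.boxProdLeft _ 0).append (cons (rung v 0 1 (by decide)) (p.reverse.boxProdLeft _ 1))
  have hW : W.IsHamiltonian := by
    have hnd := hp.isPath.support_nodup
    refine IsPath.isHamiltonian_of_mem ?_ ?_
    · rw [isPath_def]
      simp only [W, support_append, support_cons, List.tail_cons, support_boxProdLeft,
        support_reverse, List.map_reverse]
      refine List.nodup_append.2 ⟨hnd.map (Prod.mk_left_injective 0),
        List.nodup_reverse.2 (hnd.map (Prod.mk_left_injective 1)), ?_⟩
      simp
    · rintro ⟨x, b⟩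
      simp only [W, support_append, support_cons, List.tail_cons, support_boxProdLeft,
        support_reverse, List.mem_append, List.mem_map, List.mem_reverse]
      fin_cases b
      · exact .inl ⟨x, hp.mem_support x, rfl⟩
      · exact .inr ⟨x, hp.mem_support x, rfl⟩
  have hlen : W.length ≠ 1 := by
    have : p.length ≠ 0 := fun h => huv (eq_of_length_eq_zero h)
    simp only [W, length_append, length_cons, length_boxProdLeft, length_reverse]
    omega
  refine ⟨cons (rung u 1 0 (by decide)) W, ?_, ?_⟩
  · rw [isHamiltonianCycle_iff_isCycle_and_support_count_tail_eq_one, support_cons, List.tail_cons]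
    refine ⟨(cons_isCycle_iff _ _).2 ⟨hW.isPath, fun h => hlen ?_⟩, hW⟩
    exact hW.isPath.length_eq_one_of_mem_edges (by rwa [Sym2.eq_swap])
  · intro g hg b
    simp only [W, edges_cons, edges_append, edges_boxProdLeft, edges_reverse, List.mem_cons,
      List.mem_append, List.mem_map, List.mem_reverse]
    fin_cases b
    · exact .inr (.inl ⟨g, hg, rfl⟩)
    · exact .inr (.inr (.inr ⟨g, hg, rfl⟩))

end SimpleGraph.Walk

theorem hammingDist_insertNth {β : Type*} [DecidableEq β] {n : ℕ} (k : Fin (n + 1)) (a b : β)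
    (x y : Fin n → β) :
    hammingDist (k.insertNth a x : Fin (n + 1) → β) (k.insertNth b y) =
      (if a = b then 0 else 1) + hammingDist x y := by
  simp only [hammingDist, Finset.card_filter]
  rw [Fin.sum_univ_succAbove _ k]
  simp [ite_not]

theorem exists_eq_and_eq_of_hammingDist_add_lt {ι β : Type*} [Fintype ι] [DecidableEq β]
    {x y x' y' : ι → β} (h : hammingDist x y + hammingDist x' y' < Fintype.card ι) :
    ∃ i, x i = y i ∧ x' i = y' i := by
  classical
  have hcard : (Finset.univ.filter (fun i => x i ≠ y i) ∪
      Finset.univ.filter (fun i => x' i ≠ y' i)).card < Finset.univ.card :=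
    (Finset.card_union_le _ _).trans_lt h
  obtain ⟨i, -, hi⟩ := Finset.exists_mem_notMem_of_card_lt_card hcard
  simp only [Finset.mem_union, Finset.mem_filter, Finset.mem_univ, true_and, not_or, not_not] at hi
  exact ⟨i, hi⟩

namespace Q

lemma adj_iff {n : ℕ} {x y : Fin n → ZMod 2} : (Q n).Adj x y ↔ hammingDist x y = 1 := Iff.rfl

instance (n : ℕ) : DecidableRel (Q n).Adj := fun x y =>
  inferInstanceAs (Decidable (hammingDist x y = 1))

def insertNthIso (n : ℕ) (k : Fin (n + 1)) : (Q n □ (⊤ : SimpleGraph (ZMod 2))) ≃g Q (n + 1) where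
  toEquiv := (Equiv.prodComm _ _).trans (Fin.insertNthEquiv (fun _ => ZMod 2) k)
  map_rel_iff' := by
    rintro ⟨x, a⟩ ⟨y, b⟩
    change (Q (n + 1)).Adj (k.insertNth a x) (k.insertNth b y) ↔
      ((Q n).Adj x y ∧ a = b) ∨ (a ≠ b ∧ x = y)
    rw [adj_iff, adj_iff, hammingDist_insertNth, ← hammingDist_eq_zero]
    split_ifs with hab <;> simp [hab]

lemma insertNthIso_apply_removeNth {n : ℕ} (k : Fin (n + 1)) (x : Fin (n + 1) → ZMod 2) :
    insertNthIso n k (k.removeNth x, x k) = x :=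
  Fin.insertNth_self_removeNth k x

lemma adj_removeNth {n : ℕ} {k : Fin (n + 1)} {x y : Fin (n + 1) → ZMod 2}
    (h : (Q (n + 1)).Adj x y) (hk : x k = y k) : (Q n).Adj (k.removeNth x) (k.removeNth y) := by
  rw [← insertNthIso_apply_removeNth k x, ← insertNthIso_apply_removeNth k y,
    (insertNthIso n k).map_adj_iff, ← hk] at h
  exact boxProd_adj_left.1 h

lemma mk_mem_edges_map_insertNthIso {n : ℕ} {k : Fin (n + 1)} {x y : Fin (n + 1) → ZMod 2}
    {w : (Fin n → ZMod 2) × ZMod 2} {c : (Q n □ (⊤ : SimpleGraph (ZMod 2))).Walk w w}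
    (hk : x k = y k)
    (h : s(k.removeNth x, k.removeNth y).map (·, x k) ∈ c.edges) :
    s(x, y) ∈ (c.map (insertNthIso n k).toHom).edges := by
  rw [Walk.edges_map]
  refine List.mem_map.2 ⟨_, h, ?_⟩
  change s(insertNthIso n k (k.removeNth x, x k), insertNthIso n k (k.removeNth y, x k)) = s(x, y)
  rw [insertNthIso_apply_removeNth, hk, insertNthIso_apply_removeNth]

def squareCycle : (Q 2).Walk ![0, 0] ![0, 0] :=
  .cons (v := ![0, 1]) (by decide) <| .cons (v := ![1, 1]) (by decide) <|
    .cons (v := ![1, 0]) (by decide) <| .cons (by decide) .nil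

lemma isHamiltonianCycle_squareCycle : squareCycle.IsHamiltonianCycle := by
  rw [Walk.isHamiltonianCycle_iff_isCycle_and_length_eq, Walk.isCycle_def, Walk.isTrail_def]
  decide

lemma mem_edges_squareCycle : ∀ e ∈ (Q 2).edgeSet, e ∈ squareCycle.edges := by
  intro e
  induction e using Sym2.ind
  decide +revert

theorem exists_isHamiltonianCycle_mem_edges_succ {n : ℕ} (hn : 2 ≤ n)
    (ih : ∀ e f : Sym2 (Fin n → ZMod 2), e ∈ (Q n).edgeSet → f ∈ (Q n).edgeSet →
      ∃ (v : Fin n → ZMod 2) (c : (Q n).Walk v v), c.IsHamiltonianCycle ∧ e ∈ c.edges ∧ f ∈ c.edges)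
    {e f : Sym2 (Fin (n + 1) → ZMod 2)} (he : e ∈ (Q (n + 1)).edgeSet)
    (hf : f ∈ (Q (n + 1)).edgeSet) :
    ∃ (v : Fin (n + 1) → ZMod 2) (c : (Q (n + 1)).Walk v v),
      c.IsHamiltonianCycle ∧ e ∈ c.edges ∧ f ∈ c.edges := by
  induction e using Sym2.ind with | _ x y => ?_
  induction f using Sym2.ind with | _ x' y' => ?_
  rw [mem_edgeSet] at he hf
  obtain ⟨k, hk, hk'⟩ := exists_eq_and_eq_of_hammingDist_add_lt (x := x) (y := y) (x' := x')
    (y' := y') (by rw [adj_iff.1 he, adj_iff.1 hf, Fintype.card_fin]; omega)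
  set e' := s(k.removeNth x, k.removeNth y)
  set f' := s(k.removeNth x', k.removeNth y')
  obtain ⟨v, C, hC, he', hf'⟩ := ih e' f' (adj_removeNth he hk) (adj_removeNth hf hk')
  obtain ⟨g, hg, hge, hgf⟩ := hC.isCycle.exists_mem_edges_ne_ne e' f'
  induction g using Sym2.ind with | _ u w => ?_
  obtain ⟨P, hP, hPC⟩ := hC.exists_isHamiltonian_of_mem_edges hg
  obtain ⟨c, hc, hcP⟩ := hP.exists_isHamiltonianCycle_boxProd (C.adj_of_mem_edges hg).ne
  exact ⟨_, c.map (insertNthIso n k).toHom, hc.map (insertNthIso n k).bijective,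
    mk_mem_edges_map_insertNthIso hk (hcP _ (hPC _ he' hge.symm) _),
    mk_mem_edges_map_insertNthIso hk' (hcP _ (hPC _ hf' hgf.symm) _)⟩

end Q

/-- Any two edges of the hypercube `Q_n` (`n ≥ 2`) lie on a common Hamiltonian cycle. -/
theorem stmt0 (n : ℕ) (hn : 2 ≤ n) (e f : Sym2 (Fin n → ZMod 2))
    (he : e ∈ (Q n).edgeSet) (hf : f ∈ (Q n).edgeSet) :
    ∃ (v : Fin n → ZMod 2) (c : (Q n).Walk v v),
      c.IsHamiltonianCycle ∧ e ∈ c.edges ∧ f ∈ c.edges := by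
  induction n, hn using Nat.le_induction with
  | base => exact ⟨_, Q.squareCycle, Q.isHamiltonianCycle_squareCycle,
      Q.mem_edges_squareCycle e he, Q.mem_edges_squareCycle f hf⟩
  | succ n hn ih => exact Q.exists_isHamiltonianCycle_mem_edges_succ hn ih he hf
end

section
/- For m, n ≥ 2, the grid graph P_m × P_n (Cartesian product of paths on m and n vertices) contains a cycle of length l for every even integer l with 4 ≤ l ≤ mn. -/
/-!
All cycles are written down as explicit vertex lists in the grid `ℕ × ℕ` and then transported
into `P_m × P_n`. The basic shape is a comb: a spine down column `0` of height `2p`, from which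
hang `p` teeth, U-turns through two consecutive rows whose widths can be chosen freely in
`[1, n - 1]`. Combs realise every length `2s` with `2p ≤ s ≤ p n`, and taking `p = 1` or
`p = ⌊m / 2⌋` in either orientation covers every length unless `m` and `n` are both odd and `2s`
is close to `m n`. In that case the spine has odd height `2p + 3` and its last three rows are
closed off by a cap that runs out along the bottom row and back along the top one, dipping into
the middle row as often as needed; at its largest it misses a single vertex.
-/

namespace SimpleGraph

variable {V V' : Type*} {G : SimpleGraph V} {G' : SimpleGraph V'} {L : List V} {a b : V}

structure IsPathSupport (G : SimpleGraph V) (L : List V) (a b : V) : Prop where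
  isChain : L.IsChain G.Adj
  nodup : L.Nodup
  head?_eq : L.head? = some a
  getLast?_eq : L.getLast? = some b

namespace IsPathSupport

theorem append {L₁ L₂ : List V} {c d : V} (h₁ : G.IsPathSupport L₁ a b)
    (h₂ : G.IsPathSupport L₂ c d) (hbc : G.Adj b c) (hdisj : ∀ x ∈ L₁, x ∉ L₂) :
    G.IsPathSupport (L₁ ++ L₂) a d where
  isChain := List.isChain_append.2
    ⟨h₁.isChain, h₂.isChain, by simp [h₁.getLast?_eq, h₂.head?_eq, hbc]⟩
  nodup := List.nodup_append.2
    ⟨h₁.nodup, h₂.nodup, fun x hx y hy hxy => hdisj x hx (hxy ▸ hy)⟩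
  head?_eq := by simp [List.head?_append, h₁.head?_eq]
  getLast?_eq := by simp [List.getLast?_append, h₂.getLast?_eq]

theorem reverse (h : G.IsPathSupport L a b) : G.IsPathSupport L.reverse b a where
  isChain := List.isChain_reverse.2 (h.isChain.imp fun _ _ hxy => hxy.symm)
  nodup := List.nodup_reverse.2 h.nodup
  head?_eq := by rw [List.head?_reverse, h.getLast?_eq]
  getLast?_eq := by rw [List.getLast?_reverse, h.head?_eq]

theorem exists_isCycle (h : G.IsPathSupport L a b) (hba : G.Adj b a) (hL : 3 ≤ L.length) :
    ∃ c : G.Walk a a, c.IsCycle ∧ c.length = L.length := by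
  obtain ⟨L', rfl⟩ := List.head?_eq_some_iff.1 h.head?_eq
  have hchain : (a :: (L' ++ [a])).IsChain G.Adj := by
    rw [← List.cons_append]
    exact List.isChain_append.2 ⟨h.isChain, .singleton a, by simp [h.getLast?_eq, hba]⟩
  obtain ⟨c, hsupp⟩ : ∃ c : G.Walk a a, c.support = a :: (L' ++ [a]) :=
    ⟨(Walk.ofSupport _ (List.cons_ne_nil _ _) hchain).copy (by simp) (by simp),
      (Walk.support_copy _ _ _).trans (Walk.support_ofSupport _ _)⟩
  have hlen : c.length = L'.length + 1 := by
    have := c.length_support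
    rw [hsupp] at this
    simp at this
    omega
  have hnil : ¬ c.Nil := by simp [← Walk.length_eq_zero_iff, hlen]
  refine ⟨c, Walk.isCycle_iff_isPath_tail_and_le_length.2 ⟨?_, ?_⟩, by simp [hlen]⟩
  · rw [Walk.isPath_def, Walk.support_tail_of_not_nil _ hnil, hsupp, List.tail_cons]
    exact List.nodup_append_comm.2 h.nodup
  · simp at hL; omega

end IsPathSupport

theorem isPathSupport_map_iff (f : G ↪g G') :
    G'.IsPathSupport (L.map f) (f a) (f b) ↔ G.IsPathSupport L a b := by
  have hinj : Function.Injective (Option.map f) := Option.map_injective f.injective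
  constructor
  · rintro ⟨h1, h2, h3, h4⟩
    refine ⟨?_, ?_, ?_, ?_⟩
    · exact (List.isChain_map f).1 h1 |>.imp fun _ _ => f.map_adj_iff.1
    · exact (List.nodup_map_iff f.injective).1 h2
    · exact hinj (by simpa using h3)
    · exact hinj (by simpa using h4)
  · rintro ⟨h1, h2, h3, h4⟩
    exact ⟨(List.isChain_map f).2 (h1.imp fun _ _ => f.map_adj_iff.2), h2.map f.injective,
      by simp [h3], by simp [h4]⟩

theorem IsPathSupport.exists_isCycle_of_embedding (f : G ↪g G') {L : List V'} {a b : V'}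
    (h : G'.IsPathSupport L a b) (hba : G'.Adj b a) (hL : 3 ≤ L.length)
    (hrange : ∀ x ∈ L, x ∈ Set.range f) :
    ∃ (u : V) (c : G.Walk u u), c.IsCycle ∧ c.length = L.length := by
  obtain ⟨L, rfl⟩ : L ∈ Set.range (List.map f) := by rwa [Set.range_list_map]
  obtain ⟨a, rfl⟩ := hrange a (List.mem_of_mem_head? h.head?_eq)
  obtain ⟨b, rfl⟩ := hrange b (List.mem_of_mem_getLast? h.getLast?_eq)
  obtain ⟨c, hc, hlen⟩ := ((isPathSupport_map_iff f).1 h).exists_isCycle (f.map_adj_iff.1 hba)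
    (by simpa using hL)
  exact ⟨a, c, hc, by simpa using hlen⟩

theorem exists_isCycle_of_iso {l : ℕ} (f : G ≃g G')
    (h : ∃ (u : V) (c : G.Walk u u), c.IsCycle ∧ c.length = l) :
    ∃ (u : V') (c : G'.Walk u u), c.IsCycle ∧ c.length = l := by
  obtain ⟨u, c, hc, rfl⟩ := h
  exact ⟨f u, c.map f.toHom, hc.map f.injective, c.length_map _⟩

def Embedding.boxProd {W W' : Type*} {H : SimpleGraph W} {H' : SimpleGraph W'}
    (f : G ↪g G') (g : H ↪g H') : G.boxProd H ↪g G'.boxProd H' where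
  toEmbedding := f.toEmbedding.prodMap g.toEmbedding
  map_rel_iff' := by simp [boxProd_adj]

def pathGraphEmbedding (n : ℕ) : pathGraph n ↪g hasse ℕ where
  toEmbedding := Fin.valEmbedding
  map_rel_iff' := by simp [pathGraph, hasse_adj]

end SimpleGraph

open SimpleGraph

def natGrid : SimpleGraph (ℕ × ℕ) := (hasse ℕ).boxProd (hasse ℕ)

@[simp]
theorem natGrid_adj {x y : ℕ × ℕ} :
    natGrid.Adj x y ↔ (x.1 + 1 = y.1 ∨ y.1 + 1 = x.1) ∧ x.2 = y.2 ∨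
      (x.2 + 1 = y.2 ∨ y.2 + 1 = x.2) ∧ x.1 = y.1 := by
  simp [natGrid, boxProd_adj, hasse_adj]

def gridEmbedding (m n : ℕ) : (pathGraph m).boxProd (pathGraph n) ↪g natGrid :=
  (pathGraphEmbedding m).boxProd (pathGraphEmbedding n)

theorem mem_range_gridEmbedding {m n : ℕ} {x : ℕ × ℕ} :
    x ∈ Set.range (gridEmbedding m n) ↔ x.1 < m ∧ x.2 < n := by
  constructor
  · rintro ⟨⟨i, j⟩, rfl⟩
    exact ⟨i.2, j.2⟩
  · rintro ⟨hm, hn⟩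
    exact ⟨(⟨x.1, hm⟩, ⟨x.2, hn⟩), rfl⟩

def natGridSwap : natGrid ≃g natGrid := boxProdComm _ _

@[simp]
theorem natGridSwap_apply (x : ℕ × ℕ) : natGridSwap x = x.swap := rfl

theorem isPathSupport_map_swap {L : List (ℕ × ℕ)} {a b : ℕ × ℕ} :
    natGrid.IsPathSupport (L.map Prod.swap) a.swap b.swap ↔ natGrid.IsPathSupport L a b :=
  isPathSupport_map_iff natGridSwap.toEmbedding

def rowSegment (r c w : ℕ) : List (ℕ × ℕ) := (List.range' c w).map (r, ·)

@[simp]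
theorem length_rowSegment (r c w : ℕ) : (rowSegment r c w).length = w := by simp [rowSegment]

@[simp]
theorem mem_rowSegment {r c w : ℕ} {x : ℕ × ℕ} :
    x ∈ rowSegment r c w ↔ x.1 = r ∧ c ≤ x.2 ∧ x.2 < c + w := by
  obtain ⟨x₁, x₂⟩ := x
  simp only [rowSegment, List.mem_map, List.mem_range'_1, Prod.mk.injEq]
  constructor
  · rintro ⟨i, hi, rfl, rfl⟩; exact ⟨rfl, hi⟩
  · rintro ⟨rfl, hi⟩; exact ⟨x₂, hi, rfl, rfl⟩

theorem isPathSupport_rowSegment (r c : ℕ) {w : ℕ} (hw : 0 < w) :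
    natGrid.IsPathSupport (rowSegment r c w) (r, c) (r, c + w - 1) where
  isChain := (List.isChain_map _).2 <| (List.isChain_range' c w 1).imp fun _ _ h => by simp [h]
  nodup := (List.nodup_range' ..).map fun _ _ h => (Prod.mk.inj h).2
  head?_eq := by simp [rowSegment, List.head?_range', hw.ne']
  getLast?_eq := by simp [rowSegment, List.getLast?_range', hw.ne']

def spine (h : ℕ) : List (ℕ × ℕ) := (rowSegment 0 0 h).map Prod.swap

theorem mem_spine {h : ℕ} {x : ℕ × ℕ} (hx : x ∈ spine h) : x.1 < h ∧ x.2 = 0 := by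
  obtain ⟨y, hy, rfl⟩ := List.mem_map.1 hx
  simp only [mem_rowSegment] at hy
  simp; omega

theorem isPathSupport_spine (h : ℕ) : natGrid.IsPathSupport (spine (h + 1)) (0, 0) (h, 0) :=
  isPathSupport_map_swap (a := (0, 0)) (b := (0, h)) |>.2 <| by
    simpa using isPathSupport_rowSegment 0 0 h.succ_pos

def tooth (r c w : ℕ) : List (ℕ × ℕ) := rowSegment (r + 1) c w ++ (rowSegment r c w).reverse

theorem mem_tooth {r c w : ℕ} {x : ℕ × ℕ} :
    x ∈ tooth r c w ↔ (x.1 = r ∨ x.1 = r + 1) ∧ c ≤ x.2 ∧ x.2 < c + w := by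
  simp only [tooth, List.mem_append, List.mem_reverse, mem_rowSegment]; omega

theorem isPathSupport_tooth (r c : ℕ) {w : ℕ} (hw : 0 < w) :
    natGrid.IsPathSupport (tooth r c w) (r + 1, c) (r, c) :=
  (isPathSupport_rowSegment _ _ hw).append (isPathSupport_rowSegment _ _ hw).reverse (by simp)
    (by simp only [List.mem_reverse, mem_rowSegment]; omega)

def teeth (r c : ℕ) : List ℕ → List (ℕ × ℕ)
  | [] => []
  | w :: ws => teeth (r + 2) c ws ++ tooth r c w

theorem length_teeth (r c : ℕ) (ws : List ℕ) : (teeth r c ws).length = 2 * ws.sum := by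
  induction ws generalizing r with
  | nil => rfl
  | cons w ws ih => simp [teeth, tooth, ih]; ring

theorem mem_teeth {r c : ℕ} {ws : List ℕ} {x : ℕ × ℕ} (hx : x ∈ teeth r c ws) :
    r ≤ x.1 ∧ x.1 < r + 2 * ws.length ∧ c ≤ x.2 ∧ ∃ w ∈ ws, x.2 < c + w := by
  induction ws generalizing r with
  | nil => simp [teeth] at hx
  | cons w ws ih =>
    rcases List.mem_append.1 hx with hx | hx
    · obtain ⟨h1, h2, h3, v, hv, h4⟩ := ih hx
      exact ⟨by omega, by simp; omega, h3, v, List.mem_cons_of_mem _ hv, h4⟩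
    · have := mem_tooth.1 hx
      exact ⟨by omega, by simp; omega, this.2.1, w, List.mem_cons_self, this.2.2⟩

theorem SimpleGraph.IsPathSupport.append_teeth {P : List (ℕ × ℕ)} {a : ℕ × ℕ} {r c : ℕ}
    {ws : List ℕ} (hP : natGrid.IsPathSupport P a (r + 2 * ws.length, c))
    (hdisj : ∀ x ∈ P, x ∉ teeth r c ws) (hws : ∀ w ∈ ws, 0 < w) :
    natGrid.IsPathSupport (P ++ teeth r c ws) a (r, c) := by
  induction ws generalizing r with
  | nil => simpa [teeth] using hP
  | cons w ws ih =>
    have hP' : natGrid.IsPathSupport P a (r + 2 + 2 * ws.length, c) := by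
      rwa [List.length_cons, mul_add, mul_one, add_comm _ 2, ← add_assoc] at hP
    have ih' := ih hP' (fun x hx hx' => hdisj x hx (List.mem_append_left _ hx'))
      (fun v hv => hws v (List.mem_cons_of_mem _ hv))
    rw [teeth, ← List.append_assoc]
    refine ih'.append (isPathSupport_tooth r c (hws w List.mem_cons_self)) (by simp) ?_
    intro x hx hx'
    rcases List.mem_append.1 hx with hx | hx
    · exact hdisj x hx (List.mem_append_right _ hx')
    · have := mem_teeth hx; have := mem_tooth.1 hx'; omega

theorem isPathSupport_comb {cap : List (ℕ × ℕ)} {h : ℕ} {ws : List ℕ}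
    (hcap : natGrid.IsPathSupport cap (h, 1) (2 * ws.length, 1))
    (hcapMem : ∀ x ∈ cap, 2 * ws.length ≤ x.1 ∧ 1 ≤ x.2) (hws : ∀ w ∈ ws, 0 < w) :
    natGrid.IsPathSupport (spine (h + 1) ++ cap ++ teeth 0 1 ws) (0, 0) (0, 1) := by
  have hbody := (isPathSupport_spine h).append hcap (by simp)
    fun x hx hx' => by have := mem_spine hx; have := hcapMem x hx'; omega
  refine IsPathSupport.append_teeth (by simpa using hbody) (fun x hx hx' => ?_) hws
  have := mem_teeth hx'
  rcases List.mem_append.1 hx with hx | hx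
  · have := mem_spine hx; omega
  · have := hcapMem x hx; omega

theorem exists_isCycle_comb {m n h : ℕ} {cap : List (ℕ × ℕ)} {ws : List ℕ}
    (hcap : natGrid.IsPathSupport cap (h, 1) (2 * ws.length, 1))
    (hcapMem : ∀ x ∈ cap, 2 * ws.length ≤ x.1 ∧ x.1 < m ∧ 1 ≤ x.2 ∧ x.2 < n)
    (hws : ∀ w ∈ ws, 0 < w ∧ w < n) (hh : 0 < h) (hhm : h < m) :
    ∃ (u : Fin m × Fin n) (c : ((pathGraph m).boxProd (pathGraph n)).Walk u u),
      c.IsCycle ∧ c.length = h + 1 + cap.length + 2 * ws.sum := by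
  have hcomb := isPathSupport_comb hcap (fun x hx => ⟨(hcapMem x hx).1, (hcapMem x hx).2.2.1⟩)
    fun w hw => (hws w hw).1
  have hcapLen : 0 < cap.length := List.length_pos_of_mem (List.mem_of_mem_head? hcap.head?_eq)
  have hteethRows := hcapMem _ (List.mem_of_mem_getLast? hcap.getLast?_eq)
  obtain ⟨u, c, hc, hlen⟩ := hcomb.exists_isCycle_of_embedding (gridEmbedding m n) (by simp)
    (by simp [spine]; omega) fun x hx => by
      rw [mem_range_gridEmbedding]
      simp only [List.mem_append] at hx
      rcases hx with (hx | hx) | hx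
      · have := mem_spine hx; omega
      · have := hcapMem x hx; omega
      · obtain ⟨-, h1, -, w, hw, h2⟩ := mem_teeth hx
        have := hws w hw
        omega
  exact ⟨u, c, hc, by simp [hlen, spine, length_teeth, add_assoc]⟩

theorem exists_list_sum_eq {p S W : ℕ} (h₁ : p ≤ S) (h₂ : S ≤ p * W) :
    ∃ ws : List ℕ, ws.length = p ∧ ws.sum = S ∧ ∀ w ∈ ws, 0 < w ∧ w ≤ W := by
  induction p generalizing S with
  | zero => exact ⟨[], rfl, by simp_all, by simp⟩
  | succ p ih =>
    have hW : 0 < W := Nat.pos_of_ne_zero fun h => by simp [h] at h₂; omega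
    have hpW : p ≤ p * W := Nat.le_mul_of_pos_right p hW
    rw [add_mul, one_mul] at h₂
    obtain ⟨ws, hlen, hsum, hws⟩ := ih (S := S - min W (S - p)) (by omega) (by omega)
    refine ⟨min W (S - p) :: ws, by simp [hlen], by simp only [List.sum_cons, hsum]; omega, ?_⟩
    simp only [List.mem_cons, forall_eq_or_imp]
    exact ⟨⟨by omega, by omega⟩, hws⟩

theorem exists_isCycle_of_le_mul {m n p s : ℕ} (hp : 0 < p) (hpm : 2 * p ≤ m)
    (hps : 2 * p ≤ s) (hsn : s ≤ p * n) :
    ∃ (u : Fin m × Fin n) (c : ((pathGraph m).boxProd (pathGraph n)).Walk u u),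
      c.IsCycle ∧ c.length = 2 * s := by
  obtain ⟨ws, hlen, hsum, hws⟩ :=
    exists_list_sum_eq (p := p) (S := s - p) (W := n - 1) (by omega)
      (by rw [Nat.mul_sub_one]; omega)
  obtain ⟨w, ws, rfl⟩ := List.exists_cons_of_length_pos (hlen ▸ hp)
  simp only [List.length_cons, List.sum_cons, List.mem_cons, forall_eq_or_imp] at hlen hsum hws
  obtain ⟨u, c, hc, hc'⟩ := exists_isCycle_comb (m := m) (n := n) (h := 2 * ws.length + 1)
    (isPathSupport_tooth _ _ hws.1.1) (fun x hx => by have := mem_tooth.1 hx; omega)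
    (fun v hv => by have := hws.2 v hv; omega) (by omega) (by omega)
  exact ⟨u, c, hc, by simp [hc', tooth]; omega⟩

/-- The rotated teeth hang from row `r` into row `r + 1` (width `2`) or stay in row `r`
(width `1`), over the columns `1, …, 2 * ws.length`. -/
def threeRowCap (r : ℕ) (ws : List ℕ) : List (ℕ × ℕ) :=
  rowSegment (r + 2) 1 (2 * ws.length + 2) ++
    [(r + 1, 2 * ws.length + 2), (r + 1, 2 * ws.length + 1), (r, 2 * ws.length + 1)] ++
    (teeth 1 r ws).map Prod.swap

theorem length_threeRowCap (r : ℕ) (ws : List ℕ) :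
    (threeRowCap r ws).length = 2 * ws.length + 5 + 2 * ws.sum := by
  simp [threeRowCap, length_teeth]; ring

theorem mem_threeRowCap {r : ℕ} {ws : List ℕ} (hws : ∀ w ∈ ws, w ≤ 2) {x : ℕ × ℕ}
    (hx : x ∈ threeRowCap r ws) :
    r ≤ x.1 ∧ x.1 ≤ r + 2 ∧ 1 ≤ x.2 ∧ x.2 ≤ 2 * ws.length + 2 := by
  simp only [threeRowCap, List.mem_append, mem_rowSegment, List.mem_cons, List.not_mem_nil,
    or_false, List.mem_map] at hx
  rcases hx with (hx | rfl | rfl | rfl) | ⟨y, hy, rfl⟩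
  · omega
  · simp
  · simp
  · simp
  · obtain ⟨h1, h2, h3, w, hw, h4⟩ := mem_teeth hy
    have := hws w hw
    simp only [Prod.fst_swap, Prod.snd_swap]
    omega

theorem isPathSupport_threeRowCap (r : ℕ) {ws : List ℕ} (hws : ∀ w ∈ ws, 0 < w ∧ w ≤ 2) :
    natGrid.IsPathSupport (threeRowCap r ws) (r + 2, 1) (r, 1) := by
  set k := ws.length with hk
  set turn := rowSegment (r + 2) 1 (2 * k + 2) ++
    [(r + 1, 2 * k + 2), (r + 1, 2 * k + 1), (r, 2 * k + 1)]
  have hcorner : natGrid.IsPathSupport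
      [(r + 1, 2 * k + 2), (r + 1, 2 * k + 1), (r, 2 * k + 1)] (r + 1, 2 * k + 2) (r, 2 * k + 1) :=
    ⟨by simp, by simp, rfl, rfl⟩
  have hturn : natGrid.IsPathSupport turn (r + 2, 1) (r, 2 * k + 1) :=
    (isPathSupport_rowSegment (r + 2) 1 (w := 2 * k + 2) (by omega)).append hcorner
      (by simp) (by simp; omega)
  have hswap : natGrid.IsPathSupport (turn.map Prod.swap) (1, r + 2) (1 + 2 * k, r) := by
    simpa [add_comm] using isPathSupport_map_swap.2 hturn
  have hteeth := hswap.append_teeth ?_ (fun w hw => (hws w hw).1)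
  · simpa [threeRowCap, turn] using isPathSupport_map_swap.2 hteeth
  rintro _ hx hx'
  obtain ⟨y, hy, rfl⟩ := List.mem_map.1 hx
  obtain ⟨-, h1, h2, w, hw, h3⟩ := mem_teeth hx'
  have := hws w hw
  simp only [turn, List.mem_append, mem_rowSegment, List.mem_cons, List.not_mem_nil,
    or_false] at hy
  simp only [Prod.fst_swap, Prod.snd_swap] at h1 h2 h3
  rcases hy with hy | rfl | rfl | rfl <;> (try simp only at h1 h2 h3) <;> omega

theorem exists_isCycle_of_odd {p k s : ℕ} (hs : 2 * p + 2 * k + 4 ≤ s)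
    (hsmn : 2 * s < (2 * p + 3) * (2 * k + 3)) :
    ∃ (u : Fin (2 * p + 3) × Fin (2 * k + 3))
      (c : ((pathGraph (2 * p + 3)).boxProd (pathGraph (2 * k + 3))).Walk u u),
      c.IsCycle ∧ c.length = 2 * s := by
  have hmn : (2 * p + 3) * (2 * k + 3) = 4 * (p * k) + 6 * p + 6 * k + 9 := by ring
  have hpk : p * (2 * k + 2) = 2 * (p * k) + 2 * p := by ring
  -- The total width `T` is split between the `k` cap teeth (at most `2` each) and the `p` comb
  -- teeth, giving the cap as much as it can take.
  set T := s - p - k - 4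
  obtain ⟨wsCap, hlenCap, hsumCap, hwsCap⟩ :=
    exists_list_sum_eq (p := k) (S := min (2 * k) (T - p)) (W := 2) (by omega) (by omega)
  obtain ⟨ws, hlen, hsum, hws⟩ := exists_list_sum_eq (p := p) (S := T - min (2 * k) (T - p))
    (W := 2 * k + 2) (by omega) (by omega)
  obtain ⟨u, c, hc, hlenc⟩ := exists_isCycle_comb (m := 2 * p + 3) (n := 2 * k + 3)
    (h := 2 * ws.length + 2) (isPathSupport_threeRowCap _ hwsCap)
    (fun x hx => by have := mem_threeRowCap (fun w hw => (hwsCap w hw).2) hx; omega)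
    (fun w hw => by have := hws w hw; omega) (by omega) (by omega)
  exact ⟨u, c, hc, by rw [hlenc, length_threeRowCap]; omega⟩

/-- The grid `P_m × P_n` (`m, n ≥ 2`) contains a cycle of every even length `l` with
`4 ≤ l ≤ m * n`. -/
theorem stmt17 (m n : ℕ) (hm : 2 ≤ m) (hn : 2 ≤ n)
    (l : ℕ) (hl4 : 4 ≤ l) (hl : l ≤ m * n) (heven : Even l) :
    ∃ (v : Fin m × Fin n)
      (c : ((SimpleGraph.pathGraph m).boxProd (SimpleGraph.pathGraph n)).Walk v v),
      c.IsCycle ∧ c.length = l := by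
  obtain ⟨s, rfl⟩ := heven
  rw [← two_mul] at hl ⊢
  by_cases hsn : s ≤ n
  · exact exists_isCycle_of_le_mul (p := 1) one_pos hm (by omega) (by omega)
  by_cases hsm : s ≤ m
  · exact exists_isCycle_of_iso (boxProdComm _ _)
      (exists_isCycle_of_le_mul (p := 1) one_pos hn (by omega) (by omega))
  by_cases hsm' : s ≤ m / 2 * n
  · exact exists_isCycle_of_le_mul (p := m / 2) (by omega) (by omega) (by omega) hsm'
  by_cases hsn' : s ≤ n / 2 * m
  · exact exists_isCycle_of_iso (boxProdComm _ _)
      (exists_isCycle_of_le_mul (p := n / 2) (by omega) (by omega) (by omega) hsn')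
  obtain ⟨p, rfl⟩ : ∃ p, m = 2 * p + 3 := by
    rcases Nat.even_or_odd m with ⟨a, rfl⟩ | ⟨a, rfl⟩
    · refine absurd ?_ hsm'
      rw [show (a + a) / 2 = a by omega]
      nlinarith
    · exact ⟨a - 1, by omega⟩
  obtain ⟨k, rfl⟩ : ∃ k, n = 2 * k + 3 := by
    rcases Nat.even_or_odd n with ⟨a, rfl⟩ | ⟨a, rfl⟩
    · refine absurd ?_ hsn'
      rw [show (a + a) / 2 = a by omega]
      nlinarith
    · exact ⟨a - 1, by omega⟩
  have hrows : (2 * p + 3) / 2 * (2 * k + 3) = 2 * (p * k) + 3 * p + 2 * k + 3 := by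
    rw [show (2 * p + 3) / 2 = p + 1 by omega]; ring
  have hmn : (2 * p + 3) * (2 * k + 3) = 4 * (p * k) + 6 * p + 6 * k + 9 := by ring
  exact exists_isCycle_of_odd (by omega) (by omega)
end
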